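/- Geometric representation of spin states: for every n ≥ 1 and every unit vector ψ ∈ ℂ^(n+1), there exist n sphere points ω_1, …, ω_n (each ω_k = (p_k, φ_k) ∈ [0,1] × [0,2π)) and a constant c > 0 such that |⟨v_n(Ω), ψ⟩|² = c · ∏_{k=1}^n |⟨v_1(Ω), v_1(ω_k)⟩|² for every Ω = (p,φ) ∈ [0,1] × [0,2π). -/

import Mathlib

open MeasureTheory

/-- The Bloch coherent state of spin `n/2` with parameters `Ω = (p, φ)`:
components `(v_n(Ω))_k = √(binom n k) · p^(k/2) · (1-p)^((n-k)/2) · exp(-i k φ)`. -/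
noncomputable def bloch (n : ℕ) (Ω : ℝ × ℝ) : EuclideanSpace ℂ (Fin (n + 1)) :=
  WithLp.toLp 2 fun (k : Fin (n + 1)) => (↑(Real.sqrt (n.choose k) * Real.sqrt Ω.1 ^ (k : ℕ) *
      Real.sqrt (1 - Ω.1) ^ (n - (k : ℕ))) : ℂ) *
    Complex.exp (-((k : ℕ) : ℂ) * Complex.I * (Ω.2 : ℂ))

/-- A sphere point: `(p, φ) ∈ [0,1] × [0, 2π)`. -/
def IsSpherePt (Ω : ℝ × ℝ) : Prop :=
  Ω.1 ∈ Set.Icc (0 : ℝ) 1 ∧ Ω.2 ∈ Set.Ico (0 : ℝ) (2 * Real.pi)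

/-- The overlap `⟨v_n(Ω), ψ⟩` (inner product conjugate-linear in the first argument). -/
noncomputable def ov (n : ℕ) (Ω : ℝ × ℝ) (ψ : EuclideanSpace ℂ (Fin (n + 1))) : ℂ :=
  inner ℂ (bloch n Ω) ψ

/-- Normalized integral over the sphere: `∫ f(Ω) dΩ/4π = ∫_0^1 ∫_0^{2π} f(p,φ) dφ/(2π) dp`. -/
noncomputable def sphereInt (f : ℝ × ℝ → ℝ) : ℝ :=
  ∫ p in (0 : ℝ)..1, (∫ φ in (0 : ℝ)..(2 * Real.pi), f (p, φ)) / (2 * Real.pi)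

/-- The Wehrl entropy of a state `ψ ∈ ℂ^(n+1)`. -/
noncomputable def wehrl (n : ℕ) (ψ : EuclideanSpace ℂ (Fin (n + 1))) : ℝ :=
  -((n : ℝ) + 1) * sphereInt (fun Ω => ‖ov n Ω ψ‖ ^ 2 * Real.log (‖ov n Ω ψ‖ ^ 2))

/-- `ψ` is represented by the `n` sphere points `ω 1, …, ω n` with constant `c`:
`|⟨v_n(Ω), ψ⟩|² = c · ∏ k, |⟨v_1(Ω), v_1(ω k)⟩|²` for every sphere point `Ω`. -/
def Represents (n : ℕ) (ψ : EuclideanSpace ℂ (Fin (n + 1))) (ω : Fin n → ℝ × ℝ) (c : ℝ) :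
    Prop :=
  (∀ k, IsSpherePt (ω k)) ∧
    ∀ Ω, IsSpherePt Ω → ‖ov n Ω ψ‖ ^ 2 = c * ∏ k : Fin n, ‖ov 1 Ω (bloch 1 (ω k))‖ ^ 2

/-- Squared chordal distance between two sphere points (sphere of radius 1/2):
`d(ω, ω') = 1 - |⟨v_1(ω), v_1(ω')⟩|²`. -/
noncomputable def chord (ω ω' : ℝ × ℝ) : ℝ := 1 - ‖ov 1 ω (bloch 1 ω')‖ ^ 2

/-- `ψ` is a coherent state, i.e. `ψ = e^{iθ} v_n(Ω)` for some `θ` and some sphere point `Ω`. -/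
def IsCoherent (n : ℕ) (ψ : EuclideanSpace ℂ (Fin (n + 1))) : Prop :=
  ∃ (θ : ℝ) (Ω : ℝ × ℝ), IsSpherePt Ω ∧ ψ = Complex.exp ((θ : ℂ) * Complex.I) • bloch n Ω


/-!
In the homogeneous coordinates `w = √(1-p)`, `z = √p e^{iφ}` of `Ω = (p, φ)`, the overlap
`⟨v_n(Ω), ψ⟩ = ∑ₖ √(binom n k) ψₖ zᵏ wⁿ⁻ᵏ` is the homogenization of degree `n` of a nonzero
polynomial `P` of degree `d ≤ n`. Over `ℂ` it splits as `lc(P) · wⁿ⁻ᵈ · ∏ (z - r w)`, the product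
running over the roots `r` of `P`. Each factor is, up to a positive constant, a spin-1/2 overlap:
`w = ⟨v_1(Ω), v_1(0,0)⟩`, and `|z - r w|² = (1 + |r|²) |⟨v_1(Ω), v_1(ω_r)⟩|²` for a sphere point
`ω_r` built from `r`. Taking squared moduli gives the representation.
-/

open Polynomial

theorem Multiset.exists_fin_map_univ_eq {α : Type*} (t : Multiset α) {n : ℕ}
    (h : Multiset.card t = n) : ∃ x : Fin n → α, Finset.univ.val.map x = t := by
  obtain ⟨l, rfl⟩ : ∃ l : List α, (l : Multiset α) = t := Quotient.exists_rep t
  rw [Multiset.coe_card] at h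
  subst h
  exact ⟨l.get, by rw [Fin.univ_val_map, List.ofFn_get]⟩

theorem Complex.sq_norm_multiset_prod (s : Multiset ℂ) :
    ‖s.prod‖ ^ 2 = (s.map (‖·‖ ^ 2)).prod := by
  simp_rw [Complex.sq_norm, map_multiset_prod]

theorem Polynomial.homogenize_multiset_prod_X_sub_C {R : Type*} [CommRing R] (s : Multiset R) :
    (s.map fun r => X - C r).prod.homogenize (Multiset.card s) =
      (s.map fun r => MvPolynomial.X 0 - .C r * .X 1).prod := by
  induction s using Multiset.induction_on with
  | empty => simp
  | cons r s ih =>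
    have hdeg : (s.map fun r => X - C r).prod.natDegree ≤ Multiset.card s :=
      (natDegree_multiset_prod_le _).trans <| by
        simpa [Multiset.map_map, Function.comp_def] using
          Nat.mul_le_mul_left (Multiset.card s) (natDegree_X_le (R := R))
    rw [Multiset.map_cons, Multiset.prod_cons, Multiset.card_cons, add_comm,
      homogenize_mul _ _ (natDegree_X_sub_C_le r) hdeg]
    simp [ih, homogenize_X]

theorem Polynomial.eval_homogenize_of_splits {K : Type*} [Field K] {p : K[X]} (hp : p.Splits)
    {n : ℕ} (hn : p.natDegree ≤ n) (x : Fin 2 → K) :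
    MvPolynomial.eval x (p.homogenize n) =
      p.leadingCoeff * x 1 ^ (n - Multiset.card p.roots) *
        (p.roots.map fun r => x 0 - r * x 1).prod := by
  have hd : Multiset.card p.roots = p.natDegree := splits_iff_card_roots.1 hp
  have hpad : p.homogenize n =
      p.homogenize (Multiset.card p.roots) * .X 1 ^ (n - Multiset.card p.roots) := by
    rw [← homogenize_one, ← homogenize_mul _ _ hd.ge (natDegree_one.trans_le (Nat.zero_le _)),
      mul_one, Nat.add_sub_cancel' (hd ▸ hn)]
  have hfac : p.homogenize (Multiset.card p.roots) =
      .C p.leadingCoeff * (p.roots.map fun r => MvPolynomial.X 0 - .C r * .X 1).prod := by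
    conv_lhs => enter [1]; rw [hp.eq_prod_roots]
    rw [homogenize_C_mul, homogenize_multiset_prod_X_sub_C]
  simp only [hpad, hfac, map_mul, map_pow, map_multiset_prod, Multiset.map_map,
    Function.comp_def, map_sub, MvPolynomial.eval_C, MvPolynomial.eval_X]
  ring

noncomputable def blochZ (Ω : ℝ × ℝ) : ℂ :=
  (Real.sqrt Ω.1 : ℂ) * Complex.exp ((Ω.2 : ℂ) * Complex.I)

noncomputable def blochW (Ω : ℝ × ℝ) : ℂ := (Real.sqrt (1 - Ω.1) : ℂ)

theorem ov_eq_sum (n : ℕ) (Ω : ℝ × ℝ) (ψ : EuclideanSpace ℂ (Fin (n + 1))) :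
    ov n Ω ψ = ∑ k : Fin (n + 1),
      (Real.sqrt (n.choose k) : ℂ) * ψ k * blochZ Ω ^ (k : ℕ) * blochW Ω ^ (n - k) := by
  rw [ov, PiLp.inner_apply]
  refine Finset.sum_congr rfl fun k _ => ?_
  simp only [RCLike.inner_apply, bloch, PiLp.toLp_apply, map_mul, Complex.conj_ofReal,
    ← Complex.exp_conj, map_neg, Complex.conj_I, Complex.conj_natCast, blochZ, blochW]
  rw [mul_pow, ← Complex.exp_nat_mul]
  push_cast
  ring_nf

theorem ov_one_bloch (Ω ω : ℝ × ℝ) : ov 1 Ω (bloch 1 ω) =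
    Real.sqrt (1 - ω.1) * blochW Ω +
      Real.sqrt ω.1 * Complex.exp (-(ω.2 : ℂ) * Complex.I) * blochZ Ω := by
  rw [ov_eq_sum, Fin.sum_univ_two]
  simp only [bloch, PiLp.toLp_apply, Fin.val_zero, Fin.val_one, Fin.isValue, pow_zero, pow_one,
    Nat.choose_self, Nat.choose_zero_right, Nat.cast_one, Real.sqrt_one, Nat.sub_self,
    Nat.sub_zero, Nat.cast_zero, one_mul, mul_one, neg_zero, zero_mul, Complex.exp_zero]
  push_cast
  ring_nf

theorem ov_one_bloch_zero (Ω : ℝ × ℝ) : ov 1 Ω (bloch 1 (0, 0)) = blochW Ω := by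
  simp [ov_one_bloch]

theorem isSpherePt_zero : IsSpherePt (0, 0) :=
  ⟨⟨le_rfl, zero_le_one⟩, le_rfl, Real.two_pi_pos⟩

section BlochPoly

variable (n : ℕ) (ψ : EuclideanSpace ℂ (Fin (n + 1)))

noncomputable def blochPoly : ℂ[X] :=
  ∑ k : Fin (n + 1), C ((Real.sqrt (n.choose k) : ℂ) * ψ k) * X ^ (k : ℕ)

theorem natDegree_blochPoly_le :
    (blochPoly n ψ).natDegree ≤ n :=
  natDegree_sum_le_of_forall_le _ _ fun k _ =>
    (natDegree_C_mul_X_pow_le _ _).trans (Nat.lt_succ_iff.1 k.isLt)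

theorem coeff_blochPoly (k : Fin (n + 1)) :
    (blochPoly n ψ).coeff k = Real.sqrt (n.choose k) * ψ k := by
  simp only [blochPoly, finsetSum_coeff, coeff_C_mul_X_pow, Fin.val_inj]
  simp

variable {n ψ} in
theorem blochPoly_ne_zero (hψ : ψ ≠ 0) : blochPoly n ψ ≠ 0 := by
  obtain ⟨k, hk⟩ : ∃ k, ψ k ≠ 0 := by
    by_contra! h
    exact hψ (PiLp.ext h)
  have hchoose : (Real.sqrt (n.choose k) : ℂ) ≠ 0 := by
    have := Nat.choose_pos (Nat.lt_succ_iff.1 k.isLt)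
    exact_mod_cast (Real.sqrt_pos.2 (by exact_mod_cast this)).ne'
  intro h
  simpa [h, hchoose, hk] using (coeff_blochPoly n ψ k).symm

theorem ov_eq_eval_homogenize (Ω : ℝ × ℝ) :
    ov n Ω ψ = MvPolynomial.eval ![blochZ Ω, blochW Ω] ((blochPoly n ψ).homogenize n) := by
  rw [ov_eq_sum, blochPoly, homogenize_finsetSum, map_sum]
  refine Finset.sum_congr rfl fun k _ => ?_
  rw [homogenize_C_mul, homogenize_X_pow (Nat.lt_succ_iff.1 k.isLt)]
  simp [mul_assoc]

theorem norm_ov_sq_eq_prod (Ω : ℝ × ℝ) :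
    ‖ov n Ω ψ‖ ^ 2 = ‖(blochPoly n ψ).leadingCoeff‖ ^ 2 *
      (‖blochW Ω‖ ^ 2) ^ (n - Multiset.card (blochPoly n ψ).roots) *
        ((blochPoly n ψ).roots.map fun r => ‖blochZ Ω - r * blochW Ω‖ ^ 2).prod := by
  rw [ov_eq_eval_homogenize, eval_homogenize_of_splits (IsAlgClosed.splits _)
    (natDegree_blochPoly_le n ψ)]
  simp only [Matrix.cons_val_zero, Matrix.cons_val_one, norm_mul, norm_pow,
    mul_pow, Complex.sq_norm_multiset_prod, Multiset.map_map, Function.comp_def]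
  ring

end BlochPoly

/-- The antipode of the sphere point with stereographic coordinate `r`, so that
`⟨v_1(Ω), v_1(spherePtOfRoot r)⟩` vanishes exactly where `z = r w`. -/
noncomputable def spherePtOfRoot (r : ℂ) : ℝ × ℝ :=
  (1 / (1 + ‖r‖ ^ 2), toIcoMod Real.two_pi_pos 0 (-r).arg)

theorem isSpherePt_spherePtOfRoot (r : ℂ) : IsSpherePt (spherePtOfRoot r) := by
  refine ⟨⟨by simp only [spherePtOfRoot]; positivity, ?_⟩,
    by simpa [spherePtOfRoot] using toIcoMod_mem_Ico Real.two_pi_pos 0 (-r).arg⟩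
  exact div_le_one_of_le₀ (le_add_of_nonneg_right (by positivity)) (by positivity)

theorem exp_spherePtOfRoot_mul_I (r : ℂ) :
    Complex.exp ((spherePtOfRoot r).2 * Complex.I) * ‖r‖ = -r := by
  have hper : Function.Periodic (fun x : ℝ => Complex.exp (x * Complex.I)) (2 * Real.pi) :=
    fun x => by simpa using Complex.exp_mul_I_periodic x
  rw [spherePtOfRoot, ← self_sub_toIcoDiv_zsmul, hper.sub_zsmul_eq, mul_comm, ← norm_neg]
  exact Complex.norm_mul_exp_arg_mul_I (-r)

theorem spherePtOfRoot_fst_mul (r : ℂ) : (spherePtOfRoot r).1 * (1 + ‖r‖ ^ 2) = 1 :=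
  one_div_mul_cancel (by positivity)

theorem one_sub_spherePtOfRoot_fst_mul (r : ℂ) :
    (1 - (spherePtOfRoot r).1) * (1 + ‖r‖ ^ 2) = ‖r‖ ^ 2 := by
  rw [sub_mul, spherePtOfRoot_fst_mul, one_mul, add_sub_cancel_left]

theorem ov_one_bloch_spherePtOfRoot (Ω : ℝ × ℝ) (r : ℂ) :
    ov 1 Ω (bloch 1 (spherePtOfRoot r)) * Real.sqrt (1 + ‖r‖ ^ 2) =
      Complex.exp (-(spherePtOfRoot r).2 * Complex.I) * (blochZ Ω - r * blochW Ω) := by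
  set θ := (spherePtOfRoot r).2
  have hs : (0 : ℝ) ≤ 1 + ‖r‖ ^ 2 := by positivity
  have hq : (Real.sqrt (spherePtOfRoot r).1 : ℂ) * Real.sqrt (1 + ‖r‖ ^ 2) = 1 := by
    rw [← Complex.ofReal_mul, ← Real.sqrt_mul' _ hs, spherePtOfRoot_fst_mul, Real.sqrt_one,
      Complex.ofReal_one]
  have hq' : (Real.sqrt (1 - (spherePtOfRoot r).1) : ℂ) * Real.sqrt (1 + ‖r‖ ^ 2) = ‖r‖ := by
    rw [← Complex.ofReal_mul, ← Real.sqrt_mul' _ hs, one_sub_spherePtOfRoot_fst_mul,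
      Real.sqrt_sq (norm_nonneg r)]
  have hE : Complex.exp (-θ * Complex.I) * Complex.exp (θ * Complex.I) = 1 := by
    rw [← Complex.exp_add]; simp
  rw [ov_one_bloch]
  linear_combination blochW Ω * hq' + Complex.exp (-θ * Complex.I) * blochZ Ω * hq -
    ‖r‖ * blochW Ω * hE + Complex.exp (-θ * Complex.I) * blochW Ω * exp_spherePtOfRoot_mul_I r

theorem norm_ov_one_bloch_spherePtOfRoot_sq (Ω : ℝ × ℝ) (r : ℂ) :
    ‖ov 1 Ω (bloch 1 (spherePtOfRoot r))‖ ^ 2 * (1 + ‖r‖ ^ 2) =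
      ‖blochZ Ω - r * blochW Ω‖ ^ 2 := by
  have h := congrArg (‖·‖ ^ 2) (ov_one_bloch_spherePtOfRoot Ω r)
  simp only [norm_mul, mul_pow, Complex.norm_real, Real.norm_eq_abs, sq_abs,
    Real.sq_sqrt (by positivity : (0 : ℝ) ≤ 1 + ‖r‖ ^ 2)] at h
  rw [h, ← Complex.ofReal_neg, Complex.norm_exp_ofReal_mul_I, one_pow, one_mul]

theorem prod_norm_ov_one_sq_mul (Ω : ℝ × ℝ) (s : Multiset ℂ) (m : ℕ) :
    ((s.map spherePtOfRoot + Multiset.replicate m (0, 0)).map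
        fun ω => ‖ov 1 Ω (bloch 1 ω)‖ ^ 2).prod * (s.map fun r => 1 + ‖r‖ ^ 2).prod =
      (‖blochW Ω‖ ^ 2) ^ m * (s.map fun r => ‖blochZ Ω - r * blochW Ω‖ ^ 2).prod := by
  simp only [Multiset.map_add, Multiset.prod_add, Multiset.map_map, Function.comp_def,
    Multiset.map_replicate, Multiset.prod_replicate, ov_one_bloch_zero,
    ← norm_ov_one_bloch_spherePtOfRoot_sq, Multiset.prod_map_mul]
  ring

theorem exists_geometric_representation_general (n : ℕ)
    (ψ : EuclideanSpace ℂ (Fin (n + 1))) (hψ : ‖ψ‖ = 1) :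
    ∃ (ω : Fin n → ℝ × ℝ) (c : ℝ), 0 < c ∧ Represents n ψ ω c := by
  set P := blochPoly n ψ
  have hP : P ≠ 0 := blochPoly_ne_zero (by rintro rfl; simp at hψ)
  have hdeg : Multiset.card P.roots ≤ n := (card_roots' P).trans (natDegree_blochPoly_le n ψ)
  obtain ⟨ω, hω⟩ := (P.roots.map spherePtOfRoot +
    Multiset.replicate (n - Multiset.card P.roots) (0, 0)).exists_fin_map_univ_eq
      (n := n) (by simp [hdeg])
  refine ⟨ω, ‖P.leadingCoeff‖ ^ 2 * (P.roots.map fun r => 1 + ‖r‖ ^ 2).prod, ?_, fun k => ?_,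
    fun Ω _ => ?_⟩
  · refine mul_pos (pow_pos (norm_pos_iff.2 (leadingCoeff_ne_zero.2 hP)) 2)
      (Multiset.prod_pos fun x hx => ?_)
    obtain ⟨r, -, rfl⟩ := Multiset.mem_map.1 hx
    positivity
  · have hk : ω k ∈ Finset.univ.val.map ω := Multiset.mem_map_of_mem _ (Finset.mem_univ k)
    rw [hω, Multiset.mem_add, Multiset.mem_map, Multiset.mem_replicate] at hk
    rcases hk with ⟨r, -, hr⟩ | ⟨-, hk⟩
    · exact hr ▸ isSpherePt_spherePtOfRoot r
    · exact hk ▸ isSpherePt_zero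
  · have hprod : ∏ k, ‖ov 1 Ω (bloch 1 (ω k))‖ ^ 2 =
        ((Finset.univ.val.map ω).map fun ω => ‖ov 1 Ω (bloch 1 ω)‖ ^ 2).prod := by
      rw [Multiset.map_map]; rfl
    rw [norm_ov_sq_eq_prod, mul_assoc, ← prod_norm_ov_one_sq_mul, hprod, hω]
    ring

/-- Geometric representation of spin states: every unit vector `ψ ∈ ℂ^(n+1)` is
represented by `n` points on the sphere together with a constant `c > 0`. -/
theorem exists_geometric_representation (n : ℕ) (hn : 1 ≤ n)
    (ψ : EuclideanSpace ℂ (Fin (n + 1))) (hψ : ‖ψ‖ = 1) :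
    ∃ (ω : Fin n → ℝ × ℝ) (c : ℝ), 0 < c ∧ Represents n ψ ω c :=
  exists_geometric_representation_general n ψ hψ
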